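/- Among all measurable sets D ⊆ R^n with ∫_D f = γ, where f is a continuous multivariate Gaussian density, the superlevel set {w : f(w) > C} (for the C achieving probability γ) has minimal Lebesgue measure: if E is any other measurable set with ∫_E f = γ, then vol(D) ≤ vol(E). -/

import Mathlib

/-! Bathtub principle: with `D = {f > C}`, the sets `D \ E` and `E \ D` carry the same mass. That
mass is at least `C · vol (D \ E)`, since `f > C` on `D`, and at most `C · vol (E \ D)`, since
`f ≤ C` off `D`; hence `vol (D \ E) ≤ vol (E \ D)`, and adding `vol (D ∩ E)` gives
`vol D ≤ vol E`. -/

open MeasureTheory Real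

/-- Density of a multivariate Gaussian `N(μ, Σ)` on `ℝⁿ` (as `Fin n → ℝ`). -/
noncomputable def gaussDensity {n : ℕ} (μv : Fin n → ℝ)
    (S : Matrix (Fin n) (Fin n) ℝ) (x : Fin n → ℝ) : ℝ :=
  (Real.sqrt ((2 * Real.pi) ^ n * S.det))⁻¹ *
    Real.exp (-(1 / 2) * dotProduct (x - μv) (S⁻¹.mulVec (x - μv)))

open scoped ENNReal

namespace MeasureTheory

variable {α : Type*} [MeasurableSpace α] {μ : Measure α}

theorem measure_le_of_measure_sdiff_le {s t : Set α} (hs : MeasurableSet s)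
    (h : μ (s \ t) ≤ μ (t \ s)) : μ s ≤ μ t :=
  calc μ s ≤ μ (s ∩ t) + μ (s \ t) := measure_le_inter_add_sdiff μ s t
    _ ≤ μ (t ∩ s) + μ (t \ s) := by rw [Set.inter_comm]; gcongr
    _ = μ t := measure_inter_add_sdiff t hs

theorem setLIntegral_sdiff_eq_of_setLIntegral_eq {g : α → ℝ≥0∞} {s t : Set α}
    (hs : MeasurableSet s) (ht : MeasurableSet t) (hfin : ∫⁻ x in s, g x ∂μ ≠ ∞)
    (h : ∫⁻ x in s, g x ∂μ = ∫⁻ x in t, g x ∂μ) :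
    ∫⁻ x in s \ t, g x ∂μ = ∫⁻ x in t \ s, g x ∂μ := by
  have hinter_fin : ∫⁻ x in s ∩ t, g x ∂μ ≠ ∞ :=
    ne_top_of_le_ne_top hfin (lintegral_mono_set Set.inter_subset_left)
  rw [← lintegral_inter_add_sdiff g s ht, ← lintegral_inter_add_sdiff g t hs,
    Set.inter_comm t s] at h
  exact (ENNReal.add_right_inj hinter_fin).mp h

theorem measure_superlevelSet_le_of_setLIntegral_eq {g : α → ℝ≥0∞} (hg : Measurable g)
    {c : ℝ≥0∞} (hc₀ : c ≠ 0) (hc : c ≠ ∞) {E : Set α} (hE : MeasurableSet E)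
    (hfin : ∫⁻ x in {x | c < g x}, g x ∂μ ≠ ∞)
    (h : ∫⁻ x in {x | c < g x}, g x ∂μ = ∫⁻ x in E, g x ∂μ) :
    μ {x | c < g x} ≤ μ E := by
  set D := {x | c < g x}
  have hD : MeasurableSet D := measurableSet_lt measurable_const hg
  refine measure_le_of_measure_sdiff_le hD ((ENNReal.mul_le_mul_iff_right hc₀ hc).mp ?_)
  calc c * μ (D \ E) = ∫⁻ _ in D \ E, c ∂μ := (setLIntegral_const _ _).symm
    _ ≤ ∫⁻ x in D \ E, g x ∂μ := setLIntegral_mono hg fun x hx ↦ hx.1.le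
    _ = ∫⁻ x in E \ D, g x ∂μ := setLIntegral_sdiff_eq_of_setLIntegral_eq hD hE hfin h
    _ ≤ ∫⁻ _ in E \ D, c ∂μ := setLIntegral_mono measurable_const fun x hx ↦ not_lt.mp hx.2
    _ = c * μ (E \ D) := setLIntegral_const _ _

theorem measure_superlevelSet_le_of_setIntegral_eq {f : α → ℝ} (hf : Measurable f)
    (hf₀ : 0 ≤ f) {c : ℝ} (hc : 0 < c) {E : Set α} (hE : MeasurableSet E)
    (hD : IntegrableOn f {x | c < f x} μ) (hEi : IntegrableOn f E μ)
    (h : ∫ x in {x | c < f x}, f x ∂μ = ∫ x in E, f x ∂μ) :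
    μ {x | c < f x} ≤ μ E := by
  have hset : {x | c < f x} = {x | ENNReal.ofReal c < ENNReal.ofReal (f x)} := by
    ext x
    exact (iff_self_and.mpr hc.trans).trans ENNReal.ofReal_lt_ofReal_iff'.symm
  have hlint : ∀ s, IntegrableOn f s μ →
      ∫⁻ x in s, ENNReal.ofReal (f x) ∂μ = ENNReal.ofReal (∫ x in s, f x ∂μ) := fun s hs ↦
    (ofReal_integral_eq_lintegral_ofReal hs (ae_of_all _ hf₀)).symm
  rw [hset]
  refine measure_superlevelSet_le_of_setLIntegral_eq hf.ennreal_ofReal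
    (by simpa using hc) ENNReal.ofReal_ne_top hE ?_ ?_
  · rw [← hset, hlint _ hD]
    exact ENNReal.ofReal_ne_top
  · rw [← hset, hlint _ hD, hlint _ hEi, h]

end MeasureTheory

theorem continuous_gaussDensity {n : ℕ} (μv : Fin n → ℝ) (S : Matrix (Fin n) (Fin n) ℝ) :
    Continuous (gaussDensity μv S) := by
  unfold gaussDensity
  fun_prop

theorem gaussDensity_nonneg {n : ℕ} (μv : Fin n → ℝ) (S : Matrix (Fin n) (Fin n) ℝ) :
    0 ≤ gaussDensity μv S := fun x ↦ by
  unfold gaussDensity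
  positivity

theorem gaussian_superlevel_min_volume_general (n : ℕ) (μv : Fin n → ℝ)
    (S : Matrix (Fin n) (Fin n) ℝ) (γ C : ℝ)
    (hγ : γ ∈ Set.Ioo (0 : ℝ) 1) (hC : 0 < C)
    (hDγ : ∫ w in {w : Fin n → ℝ | C < gaussDensity μv S w}, gaussDensity μv S w = γ)
    (E : Set (Fin n → ℝ)) (hE : MeasurableSet E)
    (hEγ : ∫ w in E, gaussDensity μv S w = γ) :
    volume {w : Fin n → ℝ | C < gaussDensity μv S w} ≤ volume E :=
  measure_superlevelSet_le_of_setIntegral_eq (continuous_gaussDensity μv S).measurable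
    (gaussDensity_nonneg μv S) hC hE (.of_integral_ne_zero (hDγ ▸ hγ.1.ne'))
    (.of_integral_ne_zero (hEγ ▸ hγ.1.ne')) (hDγ.trans hEγ.symm)

/-- Among all measurable sets carrying Gaussian probability mass `γ`, the
superlevel set `{w | f w > C}` has minimal Lebesgue measure. -/
theorem gaussian_superlevel_min_volume (n : ℕ) (μv : Fin n → ℝ)
    (S : Matrix (Fin n) (Fin n) ℝ) (hS : S.PosDef) (γ C : ℝ)
    (hγ : γ ∈ Set.Ioo (0 : ℝ) 1) (hC : 0 < C)
    (hDγ : ∫ w in {w : Fin n → ℝ | C < gaussDensity μv S w}, gaussDensity μv S w = γ)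
    (E : Set (Fin n → ℝ)) (hE : MeasurableSet E)
    (hEγ : ∫ w in E, gaussDensity μv S w = γ) :
    volume {w : Fin n → ℝ | C < gaussDensity μv S w} ≤ volume E :=
  gaussian_superlevel_min_volume_general n μv S γ C hγ hC hDγ E hE hEγ
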